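/- arXiv:1704.08739 — 2 statements merged into one kernel-verified Lean document; each statement's English description precedes it below -/
import Mathlib

section
/- Let k be an odd positive integer and let G be an odd-k-edge-connected graph in which every vertex has degree k or 2k; define f(v) = d_G(v)/k. Let S and T be disjoint vertex subsets of G, let 𝒪 be the set of components U of G − S − T for which Σ_{v∈U} f(v) + e(U,T) is odd, and partition 𝒪 into 𝒪₁ = {U ∈ 𝒪 : e(U,T) = 0} and 𝒪₂ = {U ∈ 𝒪 : e(U,T) ≥ 1}. Then Σ_{U∈𝒪} e(U,S) ≥ k·|𝒪₁| + |𝒪₂|. -/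
/-- A multigraph: each edge `e` has two half-edges, indexed by `Bool`,
with `ends e b` the endpoint of the half-edge `(e, b)`. Loops and
multiple edges are allowed. -/
structure Multigraph (V E : Type) where
  ends : E → Bool → V

namespace Multigraph

variable {V E : Type}

/-- The degree of a vertex: the number of half-edges incident with it
(loops are counted twice). -/
noncomputable def degree (G : Multigraph V E) (v : V) : ℕ :=
  Nat.card {h : E × Bool // G.ends h.1 h.2 = v}

/-- Adjacency using only the edges in `S`. -/
def adjOn (G : Multigraph V E) (S : Set E) (u v : V) : Prop :=
  ∃ e ∈ S, (G.ends e true = u ∧ G.ends e false = v) ∨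
           (G.ends e true = v ∧ G.ends e false = u)

/-- The number of connected components of the spanning subgraph of `G`
with edge set `S`. -/
noncomputable def numComponents (G : Multigraph V E) (S : Set E) : ℕ :=
  Nat.card (Quot (G.adjOn S))

/-- `F` is an odd edge cut: `|F|` is odd and deleting `F` increases the
number of components. -/
def IsOddCut (G : Multigraph V E) (F : Set E) : Prop :=
  Odd F.ncard ∧ G.numComponents Set.univ < G.numComponents Fᶜ

/-- `G` is odd-`lam`-edge-connected: it has no odd edge cut of size at most `lam - 2`. -/
def OddEdgeConnected (G : Multigraph V E) (lam : ℕ) : Prop :=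
  ∀ F : Set E, F.ncard ≤ lam - 2 → ¬ G.IsOddCut F

/-- `τ` is an orientation of the signed graph `(G, σ)`: a `±1`-valued map on
half-edges with `τ(h₁) * τ(h₂) = - σ(e)` for the two half-edges of each edge `e`. -/
def IsOrientation (G : Multigraph V E) (σ : E → ℤ) (τ : E → Bool → ℤ) : Prop :=
  (∀ e b, τ e b = 1 ∨ τ e b = -1) ∧ ∀ e, τ e true * τ e false = -σ e

/-- The boundary of `f` at `v` under the orientation `τ`:
`∂f(v) = Σ_{h ∈ H(v)} f(e_h) τ(h)`. -/
noncomputable def boundary (G : Multigraph V E) (τ : E → Bool → ℤ) (f : E → ℤ) (v : V) : ℤ :=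
  ∑ᶠ h ∈ {h : E × Bool | G.ends h.1 h.2 = v}, f h.1 * τ h.1 h.2

/-- The set of edges incident with `v`. -/
def incident (G : Multigraph V E) (v : V) : Set E :=
  {e | ∃ b, G.ends e b = v}

/-- The graph `G_{(v;F)}` obtained by splitting the edges of `F` away from `v`:
a new vertex `none` is added, and every half-edge of an edge of `F` that ends at `v`
now ends at the new vertex. -/
noncomputable def split (G : Multigraph V E) (v : V) (F : Set E) :
    Multigraph (Option V) E where
  ends e b :=
    haveI := Classical.dec (e ∈ F ∧ G.ends e b = v)
    if e ∈ F ∧ G.ends e b = v then none else some (G.ends e b)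

/-- The degree of `v` in the spanning subgraph with edge set `H`. -/
noncomputable def degreeOn (G : Multigraph V E) (H : Set E) (v : V) : ℕ :=
  Nat.card {h : E × Bool // h.1 ∈ H ∧ G.ends h.1 h.2 = v}

/-- The degree of `v` in the graph `G − S` obtained by deleting the vertices of `S`. -/
noncomputable def degreeAvoiding (G : Multigraph V E) (S : Set V) (v : V) : ℕ :=
  Nat.card {h : E × Bool // G.ends h.1 h.2 = v ∧
    G.ends h.1 true ∉ S ∧ G.ends h.1 false ∉ S}

/-- Adjacency within the subgraph induced by the vertex set `W`. -/
def inducedAdj (G : Multigraph V E) (W : Set V) (u v : V) : Prop :=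
  ∃ e, G.ends e true ∈ W ∧ G.ends e false ∈ W ∧
    ((G.ends e true = u ∧ G.ends e false = v) ∨
     (G.ends e true = v ∧ G.ends e false = u))

/-- `U` is the vertex set of a connected component of the subgraph of `G`
induced by `W`. -/
def IsComponent (G : Multigraph V E) (W : Set V) (U : Set V) : Prop :=
  U.Nonempty ∧ U ⊆ W ∧
    ∀ u ∈ U, ∀ x, (x ∈ U ↔ x ∈ W ∧ Relation.EqvGen (G.inducedAdj W) u x)

/-- `e(X,Y)`: the number of edges with one end in `X` and the other end in `Y`
(for disjoint `X`, `Y`). -/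
noncomputable def crossCount (G : Multigraph V E) (X Y : Set V) : ℕ :=
  {e | (G.ends e true ∈ X ∧ G.ends e false ∈ Y) ∨
       (G.ends e true ∈ Y ∧ G.ends e false ∈ X)}.ncard

end Multigraph

/-! For an odd component `U`, every degree is a multiple of the odd number `k`, so
`Σ_{v∈U} f(v) ≡ Σ_{v∈U} d(v) ≡ e(U, Uᶜ) = e(U,S) + e(U,T) (mod 2)`, the last equality because
a component of `G − S − T` only sends edges to `S ∪ T`. Hence `e(U,S)` is odd, in particular
positive. If moreover `e(U,T) = 0`, the edge boundary of `U` is an odd edge cut of size `e(U,S)`,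
so odd-`k`-edge-connectivity forces `e(U,S) ≥ k - 1`, and parity gives `e(U,S) ≥ k`. -/

theorem mul_ncard_le_finsum_mem {α : Type*} {s : Set α} {f : α → ℕ} {a : ℕ} (hs : s.Finite)
    (h : ∀ x ∈ s, a ≤ f x) : a * s.ncard ≤ ∑ᶠ x ∈ s, f x := by
  rw [finsum_mem_eq_finite_toFinset_sum _ hs, Set.ncard_eq_toFinset_card s hs, mul_comm,
    ← smul_eq_mul]
  exact Finset.card_nsmul_le_sum _ _ _ fun x hx => h x (hs.mem_toFinset.1 hx)

theorem mul_ncard_add_ncard_le_finsum_mem {α : Type*} {s s₁ s₂ : Set α} {f : α → ℕ} {a : ℕ}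
    (hs : s.Finite) (hunion : s₁ ∪ s₂ = s) (hdisj : Disjoint s₁ s₂)
    (h₁ : ∀ x ∈ s₁, a ≤ f x) (h₂ : ∀ x ∈ s₂, 0 < f x) :
    a * s₁.ncard + s₂.ncard ≤ ∑ᶠ x ∈ s, f x := by
  have hs₁ : s₁.Finite := hs.subset (hunion ▸ Set.subset_union_left)
  have hs₂ : s₂.Finite := hs.subset (hunion ▸ Set.subset_union_right)
  rw [← hunion, finsum_mem_union hdisj hs₁ hs₂, ← one_mul s₂.ncard]
  exact add_le_add (mul_ncard_le_finsum_mem hs₁ h₁) (mul_ncard_le_finsum_mem hs₂ h₂)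

namespace Multigraph

variable {V E : Type} (G : Multigraph V E)

def crossEdges (X Y : Set V) : Set E :=
  {e | (G.ends e true ∈ X ∧ G.ends e false ∈ Y) ∨ (G.ends e true ∈ Y ∧ G.ends e false ∈ X)}

theorem crossCount_eq_ncard_crossEdges (X Y : Set V) :
    G.crossCount X Y = (G.crossEdges X Y).ncard := rfl

theorem mem_crossEdges_compl_iff {U : Set V} {e : E} :
    e ∈ G.crossEdges U Uᶜ ↔ ¬(G.ends e true ∈ U ↔ G.ends e false ∈ U) := by
  simp only [crossEdges, Set.mem_ofPred_eq, Set.mem_compl_iff]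
  tauto

theorem crossCount_union_right [Finite E] {U S T : Set V} (hST : Disjoint S T)
    (hUS : Disjoint U S) (hUT : Disjoint U T) :
    G.crossCount U (S ∪ T) = G.crossCount U S + G.crossCount U T := by
  simp only [crossCount_eq_ncard_crossEdges]
  rw [← Set.ncard_union_eq ?_ (Set.toFinite _) (Set.toFinite _)]
  · congr 1
    ext e
    simp only [crossEdges, Set.mem_ofPred_eq, Set.mem_union]
    tauto
  · rw [Set.disjoint_left]
    rintro e (⟨h₁, h₂⟩ | ⟨h₁, h₂⟩) (⟨h₃, h₄⟩ | ⟨h₃, h₄⟩)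
    exacts [hST.ne_of_mem h₂ h₄ rfl, hUT.ne_of_mem h₁ h₃ rfl, hUS.ne_of_mem h₃ h₁ rfl,
      hST.ne_of_mem h₁ h₃ rfl]

theorem finsum_mem_degree [Fintype V] [Fintype E] (U : Set V) :
    ∑ᶠ v ∈ U, G.degree v = Nat.card {h : E × Bool // G.ends h.1 h.2 ∈ U} := by
  classical
  rw [finsum_mem_eq_finite_toFinset_sum _ U.toFinite, Nat.card_eq_fintype_card,
    Fintype.card_subtype, Finset.card_eq_sum_card_fiberwise
      (f := fun h : E × Bool => G.ends h.1 h.2) (t := U.toFinite.toFinset) fun h hh => by simpa using hh]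
  refine Finset.sum_congr rfl fun v hv => ?_
  rw [degree, Nat.card_eq_fintype_card, Fintype.card_subtype, Finset.filter_filter]
  congr 1
  ext h
  simp only [Finset.mem_filter, Finset.mem_univ, true_and]
  exact ⟨fun h' => ⟨h' ▸ U.toFinite.mem_toFinset.1 hv, h'⟩, And.right⟩

theorem card_ends_mem_modEq_crossCount_compl [Fintype E] (U : Set V) :
    Nat.card {h : E × Bool // G.ends h.1 h.2 ∈ U} ≡ G.crossCount U Uᶜ [MOD 2] := by
  classical
  rw [Nat.card_eq_fintype_card, Fintype.card_subtype, Finset.card_filter,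
    Fintype.sum_prod_type, crossCount, Set.ncard_eq_toFinset_card', Set.toFinset_ofPred,
    Finset.card_filter]
  refine Nat.ModEq.sum fun e _ => ?_
  rw [Fintype.sum_bool]
  by_cases h₁ : G.ends e true ∈ U <;> by_cases h₂ : G.ends e false ∈ U <;>
    simp [h₁, h₂, Nat.ModEq]

theorem IsComponent.mem_iff_of_mem {G : Multigraph V E} {W U : Set V} (hU : G.IsComponent W U)
    {e : E} (htrue : G.ends e true ∈ W) (hfalse : G.ends e false ∈ W) :
    G.ends e true ∈ U ↔ G.ends e false ∈ U := by
  constructor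
  · intro h
    exact ((hU.2.2 _ h _).2 ⟨hfalse, .rel _ _ ⟨e, htrue, hfalse, .inl ⟨rfl, rfl⟩⟩⟩)
  · intro h
    exact ((hU.2.2 _ h _).2 ⟨htrue, .rel _ _ ⟨e, htrue, hfalse, .inr ⟨rfl, rfl⟩⟩⟩)

theorem IsComponent.crossEdges_compl {G : Multigraph V E} {W U : Set V}
    (hU : G.IsComponent W U) : G.crossEdges U Uᶜ = G.crossEdges U Wᶜ := by
  ext e
  have h₁ := @hU.2.1 (G.ends e true)
  have h₂ := @hU.2.1 (G.ends e false)
  have h := hU.mem_iff_of_mem (e := e)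
  simp only [crossEdges, Set.mem_ofPred_eq, Set.mem_compl_iff]
  tauto

theorem crossCount_compl_eq_add [Finite E] {S T U : Set V} (hST : Disjoint S T)
    (hU : G.IsComponent (S ∪ T)ᶜ U) :
    G.crossCount U Uᶜ = G.crossCount U S + G.crossCount U T := by
  have hUST : Disjoint U (S ∪ T) := Set.subset_compl_iff_disjoint_right.1 hU.2.1
  rw [crossCount_eq_ncard_crossEdges, hU.crossEdges_compl, compl_compl,
    ← crossCount_eq_ncard_crossEdges, G.crossCount_union_right hST
      (hUST.mono_right Set.subset_union_left) (hUST.mono_right Set.subset_union_right)]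

theorem finsum_mem_degree_modEq_crossCount_compl [Fintype V] [Fintype E] (U : Set V) :
    ∑ᶠ v ∈ U, G.degree v ≡ G.crossCount U Uᶜ [MOD 2] :=
  G.finsum_mem_degree U ▸ G.card_ends_mem_modEq_crossCount_compl U

theorem odd_crossCount_of_isComponent [Fintype V] [Fintype E] {k : ℕ} (hk : Odd k)
    (hdvd : ∀ v, k ∣ G.degree v) {S T U : Set V} (hST : Disjoint S T)
    (hU : G.IsComponent (S ∪ T)ᶜ U)
    (hodd : Odd ((∑ᶠ v ∈ U, G.degree v / k) + G.crossCount U T)) :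
    Odd (G.crossCount U S) := by
  have hsum : ∑ᶠ v ∈ U, G.degree v = k * ∑ᶠ v ∈ U, G.degree v / k := by
    rw [mul_finsum_mem' _ _ U.toFinite]
    exact finsum_mem_congr rfl fun v _ => (Nat.mul_div_cancel' (hdvd v)).symm
  have hpar := G.finsum_mem_degree_modEq_crossCount_compl U
  rw [hsum, G.crossCount_compl_eq_add hST hU] at hpar
  rw [Nat.odd_iff] at hk hodd ⊢
  rw [Nat.ModEq, Nat.mul_mod, hk, one_mul, Nat.mod_mod] at hpar
  omega

theorem numComponents_lt_of_crossEdges_compl_nonempty [Finite V] {U : Set V}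
    (hne : (G.crossEdges U Uᶜ).Nonempty) :
    G.numComponents Set.univ < G.numComponents (G.crossEdges U Uᶜ)ᶜ := by
  let φ : Quot (G.adjOn (G.crossEdges U Uᶜ)ᶜ) → Quot (G.adjOn Set.univ) :=
    Quot.map id fun _ _ ⟨e, _, h⟩ => ⟨e, trivial, h⟩
  have hφ_surj : Function.Surjective φ := Quot.ind fun v => ⟨Quot.mk _ v, rfl⟩
  -- `U` is a union of components of `G − ∂U`, yet the ends of a boundary edge are adjacent in `G`.
  let side : Quot (G.adjOn (G.crossEdges U Uᶜ)ᶜ) → Prop :=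
    Quot.lift (· ∈ U) fun u v ⟨e, he, h⟩ => by
      have hsame := not_not.1 ((G.mem_crossEdges_compl_iff).not.1 he)
      rcases h with ⟨rfl, rfl⟩ | ⟨rfl, rfl⟩
      exacts [propext hsame, propext hsame.symm]
  obtain ⟨e, he⟩ := hne
  have hφ_not_inj : ¬Function.Injective φ := fun hinj => by
    have : φ (Quot.mk _ (G.ends e true)) = φ (Quot.mk _ (G.ends e false)) :=
      Quot.sound ⟨e, trivial, .inl ⟨rfl, rfl⟩⟩
    exact G.mem_crossEdges_compl_iff.1 he (Iff.of_eq (congrArg side (hinj this)))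
  have := Fintype.ofFinite (Quot (G.adjOn (G.crossEdges U Uᶜ)ᶜ))
  have := Fintype.ofFinite (Quot (G.adjOn (Set.univ : Set E)))
  simpa only [numComponents, Nat.card_eq_fintype_card] using
    Fintype.card_lt_of_surjective_not_injective φ hφ_surj hφ_not_inj

theorem OddEdgeConnected.le_crossCount_compl [Finite V] {G : Multigraph V E} {k : ℕ}
    (hG : G.OddEdgeConnected k) (hk : Odd k) {U : Set V} (hodd : Odd (G.crossCount U Uᶜ)) :
    k ≤ G.crossCount U Uᶜ := by
  by_contra hlt
  have hne : (G.crossEdges U Uᶜ).Nonempty :=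
    Set.nonempty_of_ncard_ne_zero hodd.pos.ne'
  refine hG _ ?_ ⟨hodd, G.numComponents_lt_of_crossEdges_compl_nonempty hne⟩
  obtain ⟨a, ha⟩ := hodd
  obtain ⟨b, rfl⟩ := hk
  change G.crossCount U Uᶜ ≤ _
  omega

end Multigraph

theorem sum_component_cross_lower_bound_general
    {V E : Type} [Fintype V] [Fintype E]
    (G : Multigraph V E) (k : ℕ) (hk : Odd k)
    (hG : G.OddEdgeConnected k)
    (hdeg : ∀ v, G.degree v = k ∨ G.degree v = 2 * k)
    (S T : Set V) (hST : Disjoint S T) :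
    k * {U : Set V | (G.IsComponent (S ∪ T)ᶜ U ∧
          Odd ((∑ᶠ v ∈ U, G.degree v / k) + G.crossCount U T)) ∧
          G.crossCount U T = 0}.ncard
      + {U : Set V | (G.IsComponent (S ∪ T)ᶜ U ∧
          Odd ((∑ᶠ v ∈ U, G.degree v / k) + G.crossCount U T)) ∧
          1 ≤ G.crossCount U T}.ncard
      ≤ ∑ᶠ U ∈ {U : Set V | G.IsComponent (S ∪ T)ᶜ U ∧
          Odd ((∑ᶠ v ∈ U, G.degree v / k) + G.crossCount U T)},
          G.crossCount U S := by
  have hdvd : ∀ v, k ∣ G.degree v := fun v =>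
    (hdeg v).elim (fun h => h ▸ dvd_rfl) (fun h => h ▸ dvd_mul_left k 2)
  refine mul_ncard_add_ncard_le_finsum_mem (Set.toFinite _) ?_ ?_ ?_ ?_
  · ext U
    simp [Nat.one_le_iff_ne_zero, ← and_or_left, em]
  · exact Set.disjoint_left.2 fun U h₁ h₂ => by simp_all
  · rintro U ⟨⟨hU, hodd⟩, hT⟩
    have hcut := G.crossCount_compl_eq_add hST hU
    rw [hT, add_zero] at hcut
    have hoddS := G.odd_crossCount_of_isComponent hk hdvd hST hU hodd
    rw [← hcut] at hoddS ⊢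
    exact hG.le_crossCount_compl hk hoddS
  · rintro U ⟨⟨hU, hodd⟩, -⟩
    exact (G.odd_crossCount_of_isComponent hk hdvd hST hU hodd).pos

/-- lower bound on `Σ_{U ∈ 𝒪} e(U,S)` in an odd-`k`-edge-connected
graph with all degrees `k` or `2k`, where `f(v) = d_G(v)/k`. -/
theorem sum_component_cross_lower_bound
    {V E : Type} [Fintype V] [Fintype E]
    (G : Multigraph V E) (k : ℕ) (hk : Odd k) (hkpos : 0 < k)
    (hG : G.OddEdgeConnected k)
    (hdeg : ∀ v, G.degree v = k ∨ G.degree v = 2 * k)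
    (S T : Set V) (hST : Disjoint S T) :
    k * {U : Set V | (G.IsComponent (S ∪ T)ᶜ U ∧
          Odd ((∑ᶠ v ∈ U, G.degree v / k) + G.crossCount U T)) ∧
          G.crossCount U T = 0}.ncard
      + {U : Set V | (G.IsComponent (S ∪ T)ᶜ U ∧
          Odd ((∑ᶠ v ∈ U, G.degree v / k) + G.crossCount U T)) ∧
          1 ≤ G.crossCount U T}.ncard
      ≤ ∑ᶠ U ∈ {U : Set V | G.IsComponent (S ∪ T)ᶜ U ∧
          Odd ((∑ᶠ v ∈ U, G.degree v / k) + G.crossCount U T)},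
          G.crossCount U S :=
  sum_component_cross_lower_bound_general G k hk hG hdeg S T hST
end

section
/- Let k be an odd positive integer and let G be a graph in which every vertex has degree k or 2k; define f(v) = d_G(v)/k. Let S and T be disjoint vertex subsets of G, let 𝒪 be the set of components U of G − S − T for which Σ_{v∈U} f(v) + e(U,T) is odd, and let 𝒪₂ = {U ∈ 𝒪 : e(U,T) ≥ 1}. Then e(S,T) = Σ_{v∈T} [d_G(v) − d_{G−S}(v)], and e(S,T) ≥ k·Σ_{v∈T} [f(v) − d_{G−S}(v)] + (k−1)·|𝒪₂|. -/
theorem Set.ncard_le_ncard_of_forall_subsingleton {α β : Type*} {s : Set α} {t : Set β}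
    (r : α → β → Prop) (ht : t.Finite) (hs : ∀ a ∈ s, ∃ b ∈ t, r a b)
    (hr : ∀ b ∈ t, {a ∈ s | r a b}.Subsingleton) : s.ncard ≤ t.ncard := by
  classical
  rcases s.finite_or_infinite with hsf | hsi
  · rw [Set.ncard_eq_toFinset_card s hsf, Set.ncard_eq_toFinset_card t ht]
    refine Finset.card_le_card_of_forall_subsingleton r (by simpa using hs) fun b hb => ?_
    simpa using hr b (by simpa using hb)
  · simp [hsi.ncard]

theorem Set.finsum_mem_ncard_fiber {α β : Type*} [Finite α] (f : α → β) (P : α → Prop)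
    {T : Set β} (hT : T.Finite) :
    ∑ᶠ b ∈ T, {a | f a = b ∧ P a}.ncard = {a | f a ∈ T ∧ P a}.ncard := by
  have hfib : {a | f a ∈ T ∧ P a} = ⋃ b ∈ T, {a | f a = b ∧ P a} := by
    ext a; simp
  rw [hfib, hT.ncard_biUnion (fun _ _ => Set.toFinite _)]
  rintro b - b' - hbb'
  exact Set.disjoint_left.mpr fun a ha ha' => hbb' (ha.1.symm.trans ha'.1)

namespace Multigraph

variable {V E : Type}

theorem IsComponent.eq_of_mem {G : Multigraph V E} {W U U' : Set V}
    (h : G.IsComponent W U) (h' : G.IsComponent W U') {x : V} (hx : x ∈ U) (hx' : x ∈ U') :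
    U = U' := by
  ext y
  rw [h.2.2 x hx y, h'.2.2 x hx' y]

variable (G : Multigraph V E)

theorem degree_eq_ncard (v : V) :
    G.degree v = {h : E × Bool | G.ends h.1 h.2 = v}.ncard := by
  rw [degree, ← Nat.card_coe_set_eq]; rfl

theorem degreeAvoiding_eq_ncard (S : Set V) (v : V) :
    G.degreeAvoiding S v = {h : E × Bool | G.ends h.1 h.2 = v ∧
      (G.ends h.1 true ∉ S ∧ G.ends h.1 false ∉ S)}.ncard := by
  rw [degreeAvoiding, ← Nat.card_coe_set_eq]; rfl

theorem degree_eq_degreeAvoiding_add [Finite E] (S : Set V) (v : V) :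
    G.degree v = G.degreeAvoiding S v +
      {h : E × Bool | G.ends h.1 h.2 = v ∧
        (G.ends h.1 true ∈ S ∨ G.ends h.1 false ∈ S)}.ncard := by
  rw [degree_eq_ncard, degreeAvoiding_eq_ncard, ← Set.ncard_union_eq _ (Set.toFinite _)
    (Set.toFinite _)]
  · congr 1
    ext h
    simp only [Set.mem_union, Set.mem_ofPred_eq]
    tauto
  · rw [Set.disjoint_left]
    rintro h ⟨-, hs1, hs2⟩ ⟨-, hs⟩
    tauto

theorem ncard_halfEdges_into_eq_crossCount {S T : Set V} (hST : Disjoint S T) :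
    {h : E × Bool | G.ends h.1 h.2 ∈ T ∧
      (G.ends h.1 true ∈ S ∨ G.ends h.1 false ∈ S)}.ncard = G.crossCount S T := by
  have hd : ∀ a, a ∈ S → a ∉ T := fun a ha => Set.disjoint_left.mp hST ha
  have himage : Prod.fst '' {h : E × Bool | G.ends h.1 h.2 ∈ T ∧
      (G.ends h.1 true ∈ S ∨ G.ends h.1 false ∈ S)}
      = {e | (G.ends e true ∈ S ∧ G.ends e false ∈ T) ∨
             (G.ends e true ∈ T ∧ G.ends e false ∈ S)} := by
    ext e
    constructor
    · rintro ⟨⟨e, (_ | _)⟩, ⟨hT, hS⟩, rfl⟩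
      · exact Or.inl ⟨hS.resolve_right (hd _ · hT), hT⟩
      · exact Or.inr ⟨hT, hS.resolve_left (hd _ · hT)⟩
    · rintro (⟨hS, hT⟩ | ⟨hT, hS⟩)
      · exact ⟨(e, false), ⟨hT, Or.inl hS⟩, rfl⟩
      · exact ⟨(e, true), ⟨hT, Or.inr hS⟩, rfl⟩
  have hinj : Set.InjOn Prod.fst {h : E × Bool | G.ends h.1 h.2 ∈ T ∧
      (G.ends h.1 true ∈ S ∨ G.ends h.1 false ∈ S)} := by
    rintro ⟨e, b⟩ ⟨hT, hS⟩ ⟨e', b'⟩ ⟨hT', hS'⟩ (rfl : e = e')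
    cases b <;> cases b' <;> first
      | rfl
      | exact (hS.elim (hd _ · ‹_›) (hd _ · ‹_›)).elim
  rw [crossCount, ← himage, hinj.ncard_image]

theorem crossCount_eq_finsum_degree_sub_degreeAvoiding [Finite V] [Finite E] {S T : Set V}
    (hST : Disjoint S T) :
    (G.crossCount S T : ℤ) = ∑ᶠ v ∈ T, ((G.degree v : ℤ) - (G.degreeAvoiding S v : ℤ)) := by
  rw [← G.ncard_halfEdges_into_eq_crossCount hST,
    ← Set.finsum_mem_ncard_fiber (fun h : E × Bool => G.ends h.1 h.2) _ (Set.toFinite T),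
    Nat.cast_finsum_mem (Set.toFinite T)]
  refine finsum_mem_congr rfl fun v _ => ?_
  rw [G.degree_eq_degreeAvoiding_add S v]
  push_cast
  ring

theorem ncard_components_crossing_le [Finite V] [Finite E] {S T W : Set V}
    (hWS : Disjoint W S) (hTS : Disjoint T S) :
    {U : Set V | G.IsComponent W U ∧ 1 ≤ G.crossCount U T}.ncard
      ≤ ∑ᶠ v ∈ T, G.degreeAvoiding S v := by
  simp only [degreeAvoiding_eq_ncard]
  rw [Set.finsum_mem_ncard_fiber (fun h : E × Bool => G.ends h.1 h.2) _ (Set.toFinite T)]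
  refine Set.ncard_le_ncard_of_forall_subsingleton (fun U h => G.ends h.1 (!h.2) ∈ U)
    (Set.toFinite _) ?_ ?_
  · rintro U ⟨hU, hcross⟩
    obtain ⟨e, he⟩ := Set.nonempty_of_ncard_ne_zero (s := {e | (G.ends e true ∈ U ∧
      G.ends e false ∈ T) ∨ (G.ends e true ∈ T ∧ G.ends e false ∈ U)}) (by
        rw [crossCount] at hcross; omega)
    have hUS : ∀ x ∈ U, x ∉ S := fun x hx => Set.disjoint_left.mp hWS (hU.2.1 hx)
    have hTS' : ∀ x ∈ T, x ∉ S := fun x hx => Set.disjoint_left.mp hTS hx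
    rcases he with ⟨hu, ht⟩ | ⟨ht, hu⟩
    · exact ⟨(e, false), ⟨ht, hUS _ hu, hTS' _ ht⟩, hu⟩
    · exact ⟨(e, true), ⟨ht, hTS' _ ht, hUS _ hu⟩, hu⟩
  · rintro h - U ⟨⟨hU, -⟩, hx⟩ U' ⟨⟨hU', -⟩, hx'⟩
    exact hU.eq_of_mem hU' hx hx'

end Multigraph

theorem cross_ST_identity_and_lower_bound_general
    {V E : Type} [Fintype V] [Fintype E]
    (G : Multigraph V E) (k : ℕ) (hkpos : 0 < k)
    (hdeg : ∀ v, G.degree v = k ∨ G.degree v = 2 * k)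
    (S T : Set V) (hST : Disjoint S T) :
    (G.crossCount S T : ℤ) =
        (∑ᶠ v ∈ T, ((G.degree v : ℤ) - (G.degreeAvoiding S v : ℤ))) ∧
    (k : ℤ) * (∑ᶠ v ∈ T, ((G.degree v / k : ℕ) - (G.degreeAvoiding S v : ℤ)))
        + ((k : ℤ) - 1) * {U : Set V | (G.IsComponent (S ∪ T)ᶜ U ∧
            Odd ((∑ᶠ v ∈ U, G.degree v / k) + G.crossCount U T)) ∧
            1 ≤ G.crossCount U T}.ncard
      ≤ (G.crossCount S T : ℤ) := by
  have hcross := G.crossCount_eq_finsum_degree_sub_degreeAvoiding hST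
  refine ⟨hcross, ?_⟩
  have hdiv (v : V) : (k : ℤ) * (G.degree v / k : ℕ) = G.degree v := by
    have hkd : k ∣ G.degree v :=
      (hdeg v).elim (fun h => h ▸ dvd_refl k) (fun h => h ▸ dvd_mul_left k 2)
    exact_mod_cast Nat.mul_div_cancel' hkd
  have hcomponents : ({U : Set V | (G.IsComponent (S ∪ T)ᶜ U ∧
      Odd ((∑ᶠ v ∈ U, G.degree v / k) + G.crossCount U T)) ∧ 1 ≤ G.crossCount U T}.ncard : ℤ)
        ≤ ∑ᶠ v ∈ T, (G.degreeAvoiding S v : ℤ) := by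
    have houtside : Disjoint (S ∪ T)ᶜ S :=
      Set.disjoint_compl_left_iff_subset.mpr Set.subset_union_left
    rw [← Nat.cast_finsum_mem (Set.toFinite T), Nat.cast_le]
    refine (Set.ncard_le_ncard ?_).trans (G.ncard_components_crossing_le houtside hST.symm)
    exact fun U hU => ⟨hU.1.1, hU.2⟩
  calc _ ≤ (k : ℤ) * (∑ᶠ v ∈ T, ((G.degree v / k : ℕ) - (G.degreeAvoiding S v : ℤ)))
        + ((k : ℤ) - 1) * ∑ᶠ v ∈ T, (G.degreeAvoiding S v : ℤ) := by
        gcongr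
        omega
    _ = ∑ᶠ v ∈ T, ((G.degree v : ℤ) - (G.degreeAvoiding S v : ℤ)) := by
        rw [mul_finsum_mem, mul_finsum_mem, ← finsum_mem_add_distrib (Set.toFinite T)]
        exact finsum_mem_congr rfl fun v _ => by rw [← hdiv v]; ring
    _ = _ := hcross.symm

/-- the identity `e(S,T) = Σ_{v ∈ T} [d_G(v) − d_{G−S}(v)]` and the
lower bound `e(S,T) ≥ k Σ_{v ∈ T} [f(v) − d_{G−S}(v)] + (k−1)|𝒪₂|`, where
`f(v) = d_G(v)/k` and all degrees are `k` or `2k`. -/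
theorem cross_ST_identity_and_lower_bound
    {V E : Type} [Fintype V] [Fintype E]
    (G : Multigraph V E) (k : ℕ) (hk : Odd k) (hkpos : 0 < k)
    (hdeg : ∀ v, G.degree v = k ∨ G.degree v = 2 * k)
    (S T : Set V) (hST : Disjoint S T) :
    (G.crossCount S T : ℤ) =
        (∑ᶠ v ∈ T, ((G.degree v : ℤ) - (G.degreeAvoiding S v : ℤ))) ∧
    (k : ℤ) * (∑ᶠ v ∈ T, ((G.degree v / k : ℕ) - (G.degreeAvoiding S v : ℤ)))
        + ((k : ℤ) - 1) * {U : Set V | (G.IsComponent (S ∪ T)ᶜ U ∧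
            Odd ((∑ᶠ v ∈ U, G.degree v / k) + G.crossCount U T)) ∧
            1 ≤ G.crossCount U T}.ncard
      ≤ (G.crossCount S T : ℤ) :=
  cross_ST_identity_and_lower_bound_general G k hkpos hdeg S T hST
end
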